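/- arXiv:1605.03344 — 2 statements merged into one kernel-verified Lean document; each statement's English description precedes it below -/
import Mathlib

section
/- Let r and r₀ be vectors in ℝ³, and let R_r = exp([r]ₓ) and R_{r₀} = exp([r₀]ₓ) be the rotation matrices obtained by the matrix exponential of the corresponding skew-symmetric cross-product matrices. Then the angular distance between R_r and R_{r₀} satisfies arccos((trace(R_rᵀ R_{r₀}) − 1)/2) ≤ ‖r − r₀‖, i.e. the angular distance between two rotations is at most the Euclidean distance between their angle-axis representations. -/
open Matrix Real

/-- The skew-symmetric cross-product matrix of a vector `r ∈ ℝ³`. -/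
noncomputable def crossMat (r : EuclideanSpace ℝ (Fin 3)) : Matrix (Fin 3) (Fin 3) ℝ :=
  !![0, -r 2, r 1; r 2, 0, -r 0; -r 1, r 0, 0]

/-- The rotation matrix `R_r = exp([r]ₓ)` of an angle-axis vector `r ∈ ℝ³`. -/
noncomputable def rotOf (r : EuclideanSpace ℝ (Fin 3)) : Matrix (Fin 3) (Fin 3) ℝ :=
  NormedSpace.exp (crossMat r)

/-- Application of a `3 × 3` matrix to a vector of `ℝ³` (with the Euclidean norm). -/
noncomputable def mApp (A : Matrix (Fin 3) (Fin 3) ℝ) (x : EuclideanSpace ℝ (Fin 3)) :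
    EuclideanSpace ℝ (Fin 3) :=
  Matrix.toEuclideanLin A x

/-!
Write `r = 2x` and `r₀ = 2y`. Rodrigues' formula turns `R_r` into the Euler–Rodrigues matrix of
the unit quaternion `(cos ‖x‖, (sin ‖x‖ / ‖x‖) x)`, and `tr (R_rᵀ R_{r₀}) = 4q² - 1` where `q` is
the inner product of the quaternions of `r` and `r₀`; so the angular distance is
`arccos (2q² - 1) ≤ 2 arccos q`. It remains to see `arccos q ≤ ‖x - y‖`: by the spherical and the
planar law of cosines, this says that a spherical triangle is shorter than the planar one with the
same two sides `‖x‖, ‖y‖` and included angle `γ`, i.e. `cos c ≤ cos A cos B + sin A sin B cos γ`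
when `c² = A² + B² - 2AB cos γ`, which follows from the convexity of `u ↦ cos √u` on `[0, π²]`.
-/

open scoped Nat InnerProductSpace

section Rodrigues

variable {𝔸 : Type*} [Ring 𝔸] [Algebra ℝ 𝔸] {K : 𝔸} {a : ℝ}

lemma pow_two_mul_add_one_of_pow_three (hK : K ^ 3 = -a ^ 2 • K) (n : ℕ) :
    K ^ (2 * n + 1) = (-a ^ 2) ^ n • K := by
  induction n with
  | zero => simp
  | succ n ih =>
    rw [show 2 * (n + 1) + 1 = 2 + (2 * n + 1) by ring, pow_add, ih, mul_smul_comm,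
      ← pow_succ, hK, smul_smul, ← pow_succ]

lemma pow_two_mul_add_two_of_pow_three (hK : K ^ 3 = -a ^ 2 • K) (n : ℕ) :
    K ^ (2 * n + 2) = (-a ^ 2) ^ n • K ^ 2 := by
  rw [pow_succ, pow_two_mul_add_one_of_pow_three hK, smul_mul_assoc, ← sq]

/-- Rodrigues' formula. -/
theorem exp_eq_of_pow_three_eq_neg_sq_smul [TopologicalSpace 𝔸] [IsTopologicalRing 𝔸]
    [ContinuousSMul ℝ 𝔸] [T2Space 𝔸] (ha : a ≠ 0) (hK : K ^ 3 = -a ^ 2 • K) :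
    NormedSpace.exp K = 1 + (sin a / a) • K + ((1 - cos a) / a ^ 2) • K ^ 2 := by
  have hodd : HasSum (fun n ↦ ((2 * n + 1)! : ℝ)⁻¹ • K ^ (2 * n + 1)) ((sin a / a) • K) := by
    convert ((hasSum_sin a).div_const a).smul_const K using 1
    funext n
    rw [pow_two_mul_add_one_of_pow_three hK, smul_smul, neg_pow, ← pow_mul]
    congr 1
    field_simp
    ring
  have heven : HasSum (fun n ↦ ((2 * (n + 1))! : ℝ)⁻¹ • K ^ (2 * (n + 1)))
      (((1 - cos a) / a ^ 2) • K ^ 2) := by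
    have hcos := ((hasSum_nat_add_iff' 1).2 (hasSum_cos a)).div_const (-a ^ 2)
    convert hcos.smul_const (K ^ 2) using 1
    · funext n
      rw [show 2 * (n + 1) = 2 * n + 2 by ring, pow_two_mul_add_two_of_pow_three hK, smul_smul,
        neg_pow, ← pow_mul]
      congr 1
      field_simp
      ring
    · congr 1
      field_simp
      simp
  replace heven : HasSum (fun n ↦ ((2 * n)! : ℝ)⁻¹ • K ^ (2 * n))
      (1 + ((1 - cos a) / a ^ 2) • K ^ 2) := by
    rw [← hasSum_nat_add_iff' 1]
    simpa using heven
  rw [congrFun (NormedSpace.exp_eq_tsum ℝ) K,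
    (HasSum.even_add_odd (f := fun n ↦ (n ! : ℝ)⁻¹ • K ^ n) heven hodd).tsum_eq, add_right_comm]

end Rodrigues

lemma crossMat_smul (c : ℝ) (r : EuclideanSpace ℝ (Fin 3)) :
    crossMat (c • r) = c • crossMat r := by
  ext i j
  fin_cases i <;> fin_cases j <;> simp [crossMat]

lemma crossMat_zero : crossMat 0 = 0 := by
  simpa using crossMat_smul 0 0

lemma crossMat_pow_three (r : EuclideanSpace ℝ (Fin 3)) :
    crossMat r ^ 3 = -‖r‖ ^ 2 • crossMat r := by
  rw [EuclideanSpace.real_norm_sq_eq, Fin.sum_univ_three]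
  ext i j
  fin_cases i <;> fin_cases j <;>
    simp [crossMat, pow_succ, Matrix.mul_apply, Fin.sum_univ_three] <;> ring

/-- The Euler–Rodrigues formula: the rotation by the unit quaternion `w + v`. -/
noncomputable def eulerRodrigues (w : ℝ) (v : EuclideanSpace ℝ (Fin 3)) :
    Matrix (Fin 3) (Fin 3) ℝ :=
  1 + (2 * w) • crossMat v + (2 : ℝ) • crossMat v ^ 2

lemma rotOf_two_smul_eq_eulerRodrigues (x : EuclideanSpace ℝ (Fin 3)) :
    rotOf ((2 : ℝ) • x) = eulerRodrigues (cos ‖x‖) ((sin ‖x‖ / ‖x‖) • x) := by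
  rcases eq_or_ne x 0 with rfl | hx
  · simp [rotOf, eulerRodrigues, crossMat_zero]
  have hx' : ‖x‖ ≠ 0 := norm_ne_zero_iff.2 hx
  have hnorm : ‖(2 : ℝ) • x‖ = 2 * ‖x‖ := by rw [norm_smul, Real.norm_two]
  have h₁ : sin (2 * ‖x‖) / (2 * ‖x‖) * 2 = 2 * cos ‖x‖ * (sin ‖x‖ / ‖x‖) := by
    rw [sin_two_mul]; field_simp
  have h₂ : (1 - cos (2 * ‖x‖)) / (2 * ‖x‖) ^ 2 * 2 ^ 2 = 2 * (sin ‖x‖ / ‖x‖) ^ 2 := by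
    rw [cos_two_mul, cos_sq']; field_simp; ring
  rw [rotOf, exp_eq_of_pow_three_eq_neg_sq_smul (hnorm ▸ mul_ne_zero two_ne_zero hx')
    (crossMat_pow_three _), hnorm, crossMat_smul, smul_pow, smul_smul, smul_smul, h₁, h₂,
    eulerRodrigues, crossMat_smul, smul_pow, smul_smul, smul_smul]

lemma trace_transpose_eulerRodrigues_mul {w₁ w₂ : ℝ} {v₁ v₂ : EuclideanSpace ℝ (Fin 3)}
    (h₁ : w₁ ^ 2 + ‖v₁‖ ^ 2 = 1) (h₂ : w₂ ^ 2 + ‖v₂‖ ^ 2 = 1) :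
    ((eulerRodrigues w₁ v₁)ᵀ * eulerRodrigues w₂ v₂).trace =
      4 * (w₁ * w₂ + ⟪v₁, v₂⟫_ℝ) ^ 2 - 1 := by
  rw [EuclideanSpace.real_norm_sq_eq, Fin.sum_univ_three] at h₁ h₂
  simp [trace, Matrix.mul_apply, Fin.sum_univ_three, eulerRodrigues, crossMat, pow_two,
    PiLp.inner_apply]
  linear_combination (-4 * (1 - (v₂ 0 ^ 2 + v₂ 1 ^ 2 + v₂ 2 ^ 2))) * h₁ + (-4 * w₁ ^ 2) * h₂

lemma cos_norm_sq_add_norm_sin_div_norm_smul_sq {E : Type*} [NormedAddCommGroup E]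
    [NormedSpace ℝ E] (x : E) : cos ‖x‖ ^ 2 + ‖(sin ‖x‖ / ‖x‖) • x‖ ^ 2 = 1 := by
  rcases eq_or_ne x 0 with rfl | hx
  · simp
  rw [norm_smul, Real.norm_eq_abs, abs_div, abs_norm, div_mul_cancel₀ _ (norm_ne_zero_iff.2 hx),
    sq_abs, cos_sq_add_sin_sq]

lemma sin_div_le_sin_div_of_le {x y : ℝ} (hx : 0 < x) (hxy : x ≤ y) (hy : y ≤ π) :
    sin y / y ≤ sin x / x := by
  have h := strictConcaveOn_sin_Icc.concaveOn.neg.secant_mono (a := 0) ⟨le_rfl, pi_pos.le⟩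
    ⟨hx.le, hxy.trans hy⟩ ⟨hx.le.trans hxy, hy⟩ hx.ne' (hx.trans_le hxy).ne' hxy
  simp only [Pi.neg_apply, sin_zero, neg_zero, sub_zero, neg_div] at h
  linarith

lemma convexOn_cos_sqrt : ConvexOn ℝ (Set.Icc 0 (π ^ 2)) fun u ↦ cos √u := by
  have hderiv : ∀ u ∈ Set.Ioo 0 (π ^ 2), HasDerivAt (fun u ↦ cos √u) (-(sin √u / √u) / 2) u :=
    fun u hu ↦ by
      convert (hasDerivAt_sqrt hu.1.ne').cos using 1
      field_simp
  refine MonotoneOn.convexOn_of_deriv (convex_Icc _ _) (by fun_prop) ?_ ?_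
  · rw [interior_Icc]
    exact fun u hu ↦ (hderiv u hu).differentiableAt.differentiableWithinAt
  · rw [interior_Icc]
    intro u hu v hv huv
    rw [(hderiv u hu).deriv, (hderiv v hv).deriv]
    have := sin_div_le_sin_div_of_le (sqrt_pos.2 hu.1) (sqrt_le_sqrt huv)
      ((sqrt_le_left pi_pos.le).2 hv.2.le)
    linarith

lemma antitoneOn_cos_sqrt : AntitoneOn (fun u ↦ cos √u) (Set.Icc 0 (π ^ 2)) := by
  intro u hu v hv huv
  have hmem : ∀ w ∈ Set.Icc 0 (π ^ 2), √w ∈ Set.Icc 0 π := fun w hw ↦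
    ⟨sqrt_nonneg w, (sqrt_le_left pi_pos.le).2 hw.2⟩
  exact antitoneOn_cos (hmem u hu) (hmem v hv) (sqrt_le_sqrt huv)

-- Truncating at `π²` keeps the convexity and removes the constraint `A + B ≤ π` below.
lemma convexOn_cos_sqrt_min : ConvexOn ℝ (Set.Ici 0) fun u ↦ cos √(min u (π ^ 2)) := by
  have hconc : ConcaveOn ℝ (Set.Ici 0) fun u : ℝ ↦ min u (π ^ 2) :=
    (concaveOn_id (convex_Ici 0)).inf (concaveOn_const _ (convex_Ici 0))
  have himage : (fun u : ℝ ↦ min u (π ^ 2)) '' Set.Ici 0 = Set.Icc 0 (π ^ 2) := by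
    ext u
    constructor
    · rintro ⟨v, hv, rfl⟩
      exact ⟨le_min hv (sq_nonneg π), min_le_right _ _⟩
    · exact fun hu ↦ ⟨u, hu.1, min_eq_left hu.2⟩
  refine ConvexOn.comp_concaveOn (g := fun u ↦ cos √u) ?_ hconc ?_ <;> rw [himage]
  · exact convexOn_cos_sqrt
  · exact antitoneOn_cos_sqrt

lemma cos_sqrt_min_sq_le_cos (c : ℝ) : cos √(min (c ^ 2) (π ^ 2)) ≤ cos c := by
  rcases le_total |c| π with hc | hc
  · rw [min_eq_left (sq_le_sq' (by linarith [neg_abs_le c]) (le_abs_self c |>.trans hc)),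
      sqrt_sq_eq_abs, cos_abs]
  · rw [min_eq_right (by simpa [sq_abs] using pow_le_pow_left₀ pi_pos.le hc 2),
      sqrt_sq pi_pos.le, cos_pi]
    exact neg_one_le_cos c

lemma arccos_cos_mul_cos_add_sin_mul_sin_mul_le_sqrt (A B t : ℝ) (ht₁ : -1 ≤ t) (ht₂ : t ≤ 1) :
    arccos (cos A * cos B + sin A * sin B * t) ≤ √(A ^ 2 + B ^ 2 - 2 * A * B * t) := by
  set F : ℝ → ℝ := fun u ↦ cos √(min u (π ^ 2))
  -- Both sides are the same convex combination of their values at `t = 1` and `t = -1`.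
  have hcomb : A ^ 2 + B ^ 2 - 2 * A * B * t =
      (1 + t) / 2 * (A - B) ^ 2 + (1 - t) / 2 * (A + B) ^ 2 := by ring
  have hcos : cos A * cos B + sin A * sin B * t =
      (1 + t) / 2 * cos (A - B) + (1 - t) / 2 * cos (A + B) := by
    rw [cos_sub, cos_add]; ring
  have hF : F (A ^ 2 + B ^ 2 - 2 * A * B * t) ≤ cos A * cos B + sin A * sin B * t := by
    rw [hcomb, hcos]
    calc F _ ≤ (1 + t) / 2 * F ((A - B) ^ 2) + (1 - t) / 2 * F ((A + B) ^ 2) :=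
          convexOn_cos_sqrt_min.2 (Set.mem_Ici.2 (sq_nonneg _)) (Set.mem_Ici.2 (sq_nonneg _))
            (by linarith) (by linarith) (by ring)
      _ ≤ _ := by
          gcongr
          · linarith
          · exact cos_sqrt_min_sq_le_cos _
          · exact cos_sqrt_min_sq_le_cos _
  calc arccos _ ≤ arccos (F (A ^ 2 + B ^ 2 - 2 * A * B * t)) := arccos_le_arccos hF
    _ = √(min (A ^ 2 + B ^ 2 - 2 * A * B * t) (π ^ 2)) :=
        arccos_cos (sqrt_nonneg _) ((sqrt_le_left pi_pos.le).2 (min_le_right _ _))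
    _ ≤ _ := sqrt_le_sqrt (min_le_left _ _)

lemma arccos_cos_norm_mul_cos_norm_add_inner_le_norm_sub {E : Type*} [NormedAddCommGroup E]
    [InnerProductSpace ℝ E] (x y : E) :
    arccos (cos ‖x‖ * cos ‖y‖ + ⟪(sin ‖x‖ / ‖x‖) • x, (sin ‖y‖ / ‖y‖) • y⟫_ℝ) ≤ ‖x - y‖ := by
  have hinner : ⟪(sin ‖x‖ / ‖x‖) • x, (sin ‖y‖ / ‖y‖) • y⟫_ℝ =
      sin ‖x‖ * sin ‖y‖ * cos (InnerProductGeometry.angle x y) := by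
    rw [real_inner_smul_left, real_inner_smul_right, InnerProductGeometry.cos_angle]
    ring
  have hnorm : ‖x - y‖ =
      √(‖x‖ ^ 2 + ‖y‖ ^ 2 - 2 * ‖x‖ * ‖y‖ * cos (InnerProductGeometry.angle x y)) := by
    rw [sq, sq, ← InnerProductGeometry.norm_sub_sq_eq_norm_sq_add_norm_sq_sub_two_mul_norm_mul_norm_mul_cos_angle,
      sqrt_mul_self (norm_nonneg _)]
  rw [hinner, hnorm]
  exact arccos_cos_mul_cos_add_sin_mul_sin_mul_le_sqrt _ _ _ (neg_one_le_cos _) (cos_le_one _)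

lemma arccos_cos_le {θ : ℝ} (hθ : 0 ≤ θ) : arccos (cos θ) ≤ θ := by
  rcases le_total θ π with h | h
  · rw [arccos_cos hθ h]
  · exact (arccos_le_pi _).trans h

lemma arccos_two_mul_sq_sub_one_le (q : ℝ) : arccos (2 * q ^ 2 - 1) ≤ 2 * arccos q := by
  rcases le_or_gt q (-1) with hq | hq
  · rw [arccos_of_le_neg_one hq]
    linarith [arccos_le_pi (2 * q ^ 2 - 1), pi_pos]
  rcases le_or_gt 1 q with hq' | hq'
  · rw [arccos_of_one_le (by nlinarith)]
    exact mul_nonneg zero_le_two (arccos_nonneg q)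
  have hcos : 2 * q ^ 2 - 1 = cos (2 * arccos q) := by
    rw [cos_two_mul, cos_arccos hq.le hq'.le]
  rw [hcos]
  exact arccos_cos_le (mul_nonneg zero_le_two (arccos_nonneg q))

theorem angular_distance_le_angle_axis_distance (r r₀ : EuclideanSpace ℝ (Fin 3)) :
    Real.arccos ((((rotOf r)ᵀ * rotOf r₀).trace - 1) / 2) ≤ ‖r - r₀‖ := by
  have halve : ∀ r : EuclideanSpace ℝ (Fin 3), ∃ x, r = (2 : ℝ) • x :=
    fun r ↦ ⟨(2⁻¹ : ℝ) • r, by rw [smul_smul]; norm_num⟩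
  obtain ⟨x, rfl⟩ := halve r
  obtain ⟨y, rfl⟩ := halve r₀
  rw [rotOf_two_smul_eq_eulerRodrigues, rotOf_two_smul_eq_eulerRodrigues,
    trace_transpose_eulerRodrigues_mul (cos_norm_sq_add_norm_sin_div_norm_smul_sq x)
      (cos_norm_sq_add_norm_sin_div_norm_smul_sq y), ← smul_sub, norm_smul, Real.norm_two]
  set q := cos ‖x‖ * cos ‖y‖ + ⟪(sin ‖x‖ / ‖x‖) • x, (sin ‖y‖ / ‖y‖) • y⟫_ℝ
  calc arccos ((4 * q ^ 2 - 1 - 1) / 2) = arccos (2 * q ^ 2 - 1) := by congr 1; ring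
    _ ≤ 2 * arccos q := arccos_two_mul_sq_sub_one_le q
    _ ≤ 2 * ‖x - y‖ := by
        gcongr
        exact arccos_cos_norm_mul_cos_norm_add_inner_le_norm_sub x y
end

section
/- (Bounds of the L₂ registration error) Let Y be a nonempty finite set of points in ℝ³, let x₁, …, x_N ∈ ℝ³ be data points, let r₀, t₀ ∈ ℝ³, and let σ_r, σ_t ≥ 0. For r, t ∈ ℝ³ define the per-point residual e_i(r, t) = min_{y ∈ Y} ‖exp([r]ₓ) x_i + t − y‖ and the registration error E(r, t) = Σ_{i=1}^{N} e_i(r, t)². Define γ_{r,i} = 2 sin(min(√3 σ_r / 2, π/2)) ‖x_i‖ and γ_t = √3 σ_t. Then for every r in the cube of half side-length σ_r centered at r₀ and every t in the cube of half side-length σ_t centered at t₀: Σ_{i=1}^{N} max(e_i(r₀, t₀) − (γ_{r,i} + γ_t), 0)² ≤ E(r, t). In particular this sum is a lower bound, and E(r₀, t₀) an upper bound, of the infimum of E over the domain. -/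
/-
Each residual `e_i` is the distance from a transformed point to `Y`, hence 1-Lipschitz in that
point, so it suffices to bound how far `R_r x_i + t` moves from `R_{r₀} x_i + t₀`. The translation
moves it by at most `‖t - t₀‖ ≤ √3 σ_t`. For the rotation, the derivative of
`s ↦ exp (s A) exp ((1 - s) B) x` is `exp (s A) (A - B) exp ((1 - s) B) x`, and the exponential of a
skew matrix is orthogonal, so `‖R_a x - R_b x‖ ≤ ‖a - b‖ ‖x‖`. Thus `s ↦ R_{r₀ + s (r - r₀)} x` is a
`‖r - r₀‖ ‖x‖`-Lipschitz curve on the sphere of radius `‖x‖`; summing the angles over finer and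
finer subdivisions, its endpoints subtend an angle `θ ≤ ‖r - r₀‖ ≤ √3 σ_r`, and the chord is
`2 sin (θ / 2) ‖x‖ ≤ γ_{r,i}`.
-/

open Matrix Real

open Filter Topology InnerProductGeometry

section Angle

variable {V : Type*} [NormedAddCommGroup V] [InnerProductSpace ℝ V]

theorem norm_sub_eq_two_mul_sin_angle_div_two_mul {x y : V} (h : ‖x‖ = ‖y‖) :
    ‖x - y‖ = 2 * sin (angle x y / 2) * ‖x‖ := by
  have hsin : 0 ≤ sin (angle x y / 2) :=
    sin_nonneg_of_nonneg_of_le_pi (by linarith [angle_nonneg x y])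
      (by linarith [angle_le_pi x y, pi_pos])
  have hcos : cos (angle x y) = 1 - 2 * sin (angle x y / 2) ^ 2 := by
    rw [show angle x y = 2 * (angle x y / 2) by ring, cos_two_mul, cos_sq']
    ring_nf
  refine (sq_eq_sq₀ (norm_nonneg _) (by positivity)).mp ?_
  have := norm_sub_sq_eq_norm_sq_add_norm_sq_sub_two_mul_norm_mul_norm_mul_cos_angle x y
  rw [← h, hcos] at this
  linear_combination this

theorem angle_eq_two_mul_arcsin {x y : V} (hx : x ≠ 0) (h : ‖x‖ = ‖y‖) :
    angle x y = 2 * arcsin (‖x - y‖ / (2 * ‖x‖)) := by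
  have hx' : ‖x‖ ≠ 0 := norm_ne_zero_iff.mpr hx
  rw [norm_sub_eq_two_mul_sin_angle_div_two_mul h, mul_div_mul_right _ _ hx',
    mul_div_cancel_left₀ _ two_ne_zero,
    arcsin_sin (by linarith [angle_nonneg x y, pi_pos]) (by linarith [angle_le_pi x y])]
  ring

theorem norm_sub_le_two_mul_sin_min_mul {x y : V} {δ : ℝ} (h : ‖x‖ = ‖y‖)
    (hδ : angle x y ≤ δ) : ‖x - y‖ ≤ 2 * sin (min (δ / 2) (π / 2)) * ‖x‖ := by
  rw [norm_sub_eq_two_mul_sin_angle_div_two_mul h]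
  gcongr
  exact sin_le_sin_of_le_of_le_pi_div_two (by linarith [angle_nonneg x y, pi_pos])
    (min_le_right _ _) (le_min (by linarith) (by linarith [angle_le_pi x y]))

theorem angle_le_sum_angle_succ {p : ℕ → V} (hp : p 0 ≠ 0) (n : ℕ) :
    angle (p 0) (p n) ≤ ∑ k ∈ Finset.range n, angle (p k) (p (k + 1)) := by
  induction n with
  | zero => simp [angle_self hp]
  | succ n ih =>
    rw [Finset.sum_range_succ]
    exact (angle_le_angle_add_angle _ (p n) _).trans (by gcongr)

theorem tendsto_nat_mul_arcsin_div (a : ℝ) :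
    Tendsto (fun n : ℕ => n * arcsin (a / n)) atTop (𝓝 a) := by
  have hderiv : HasDerivAt (fun s => arcsin (a * s)) a 0 := by
    have := (hasDerivAt_arcsin (x := a * 0) (by simp) (by simp)).comp (0:ℝ)
      ((hasDerivAt_id (0:ℝ)).const_mul a)
    simpa [Function.comp_def] using this
  have hinv : Tendsto (fun n : ℕ => (n : ℝ)⁻¹) atTop (𝓝[≠] 0) :=
    (tendsto_inv_atTop_nhdsGT_zero.comp tendsto_natCast_atTop_atTop).mono_right
      (nhdsWithin_mono _ fun _ h => ne_of_gt h)
  refine (hderiv.tendsto_slope_zero.comp hinv).congr fun n => ?_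
  simp [div_eq_mul_inv]

theorem mul_angle_le_of_norm_sub_le {c : ℝ → V} {ρ L : ℝ} (hc : ∀ s, ‖c s‖ = ρ)
    (hL : ∀ s s', ‖c s - c s'‖ ≤ L * |s - s'|) : ρ * angle (c 0) (c 1) ≤ L := by
  rcases (show 0 ≤ ρ from hc 0 ▸ norm_nonneg _).eq_or_lt with hρ | hρ
  · simpa [← hρ] using (norm_nonneg _).trans (hL 1 0)
  have hc0 : ∀ s, c s ≠ 0 := fun s => norm_ne_zero_iff.mp (by rw [hc]; exact hρ.ne')
  have hsub : ∀ n : ℕ, 0 < n → angle (c 0) (c 1) ≤ 2 * (n * arcsin (L / (2 * ρ) / n)) := by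
    intro n hn
    have hn' : (0 : ℝ) < n := Nat.cast_pos.mpr hn
    have hstep : ∀ k : ℕ,
        angle (c (k / n)) (c ((k + 1 : ℕ) / n)) ≤ 2 * arcsin (L / (2 * ρ) / n) := by
      intro k
      rw [angle_eq_two_mul_arcsin (hc0 _) (by rw [hc, hc]), hc]
      refine mul_le_mul_of_nonneg_left (monotone_arcsin ?_) zero_le_two
      have := hL (k / n) ((k + 1 : ℕ) / n)
      rw [show (k : ℝ) / n - (k + 1 : ℕ) / n = -(1 / n) by push_cast; ring, abs_neg,
        abs_of_pos (by positivity)] at this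
      rw [div_right_comm]
      exact div_le_div_of_nonneg_right (this.trans_eq (by ring)) (by positivity)
    calc angle (c 0) (c 1) = angle (c ((0 : ℕ) / n)) (c ((n : ℕ) / n)) := by
          rw [Nat.cast_zero, zero_div, div_self hn'.ne']
      _ ≤ ∑ k ∈ Finset.range n, angle (c (k / n)) (c ((k + 1 : ℕ) / n)) :=
          angle_le_sum_angle_succ (p := fun k : ℕ => c (k / n)) (by simpa using hc0 0) n
      _ ≤ ∑ k ∈ Finset.range n, 2 * arcsin (L / (2 * ρ) / n) :=
          Finset.sum_le_sum fun k _ => hstep k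
      _ = 2 * (n * arcsin (L / (2 * ρ) / n)) := by
          rw [Finset.sum_const, Finset.card_range, nsmul_eq_mul]; ring
  have hlim := (tendsto_nat_mul_arcsin_div (L / (2 * ρ))).const_mul 2
  have := ge_of_tendsto hlim (eventually_atTop.mpr ⟨1, fun n hn => hsub n hn⟩)
  rw [← le_div_iff₀' hρ]
  convert this using 1
  field_simp

end Angle

section MatrixExp

variable {n : Type*} [Fintype n] [DecidableEq n]

theorem Matrix.norm_toEuclideanLin_of_mem_unitaryGroup {𝕜 : Type*} [RCLike 𝕜] {U : Matrix n n 𝕜}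
    (hU : U ∈ unitaryGroup n 𝕜) (x : EuclideanSpace 𝕜 n) : ‖toEuclideanLin U x‖ = ‖x‖ :=
  ContinuousLinearMap.norm_map_of_mem_unitary (u := toEuclideanCLM (𝕜 := 𝕜) U)
    (Unitary.map_mem _ hU) x

theorem Matrix.exp_mem_unitaryGroup_of_transpose_eq_neg {A : Matrix n n ℝ} (hA : Aᵀ = -A) :
    NormedSpace.exp A ∈ unitaryGroup n ℝ := by
  rw [mem_unitaryGroup_iff', star_eq_conjTranspose, conjTranspose_eq_transpose_of_trivial,
    ← exp_transpose, hA, exp_neg]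
  exact nonsing_inv_mul _ ((isUnit_iff_isUnit_det _).mp (isUnit_exp A))

theorem Matrix.norm_toEuclideanLin_exp_of_transpose_eq_neg {A : Matrix n n ℝ} (hA : Aᵀ = -A)
    (x : EuclideanSpace ℝ n) : ‖toEuclideanLin (NormedSpace.exp A) x‖ = ‖x‖ :=
  norm_toEuclideanLin_of_mem_unitaryGroup (exp_mem_unitaryGroup_of_transpose_eq_neg hA) x

attribute [local instance] Matrix.linftyOpNormedAddCommGroup Matrix.linftyOpNormedRing
  Matrix.linftyOpNormedAlgebra

theorem Matrix.norm_toEuclideanLin_exp_sub_exp_le {A B : Matrix n n ℝ} (hA : Aᵀ = -A)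
    (hB : Bᵀ = -B) {K : ℝ} (hK : ∀ v, ‖toEuclideanLin (A - B) v‖ ≤ K * ‖v‖)
    (x : EuclideanSpace ℝ n) :
    ‖toEuclideanLin (NormedSpace.exp A) x - toEuclideanLin (NormedSpace.exp B) x‖ ≤ K * ‖x‖ := by
  have skew_smul : ∀ {M : Matrix n n ℝ} (s : ℝ), Mᵀ = -M → (s • M)ᵀ = -(s • M) := by
    intro M s hM; rw [transpose_smul, hM, smul_neg]
  let φ : Matrix n n ℝ →L[ℝ] EuclideanSpace ℝ n :=
    LinearMap.toContinuousLinearMap (toEuclideanLin.toLinearMap.flip x)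
  let G : ℝ → EuclideanSpace ℝ n :=
    fun s => φ (NormedSpace.exp (s • A) * NormedSpace.exp ((1 - s) • B))
  let G' : ℝ → EuclideanSpace ℝ n :=
    fun s => φ (NormedSpace.exp (s • A) * ((A - B) * NormedSpace.exp ((1 - s) • B)))
  have hG : ∀ s, HasDerivAt G (G' s) s := by
    intro s
    have hB' : HasDerivAt (fun u : ℝ => NormedSpace.exp ((1 - u) • B))
        ((-1 : ℝ) • (B * NormedSpace.exp ((1 - s) • B))) s :=
      (hasDerivAt_exp_smul_const' B (1 - s)).scomp s ((hasDerivAt_id s).const_sub 1)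
    have h := (hasDerivAt_exp_smul_const A s).mul hB'
    refine φ.hasFDerivAt.comp_hasDerivAt s (h.congr_deriv ?_)
    simp only [neg_smul, one_smul]
    noncomm_ring
  have hG' : ∀ s ∈ Set.Ico (0 : ℝ) 1, ‖G' s‖ ≤ K * ‖x‖ := by
    intro s _
    have : G' s = toEuclideanLin (NormedSpace.exp (s • A)) (toEuclideanLin (A - B)
        (toEuclideanLin (NormedSpace.exp ((1 - s) • B)) x)) := by
      simp [G', φ, toLpLin_apply, mulVec_mulVec]
    rw [this, norm_toEuclideanLin_exp_of_transpose_eq_neg (skew_smul s hA)]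
    exact (hK _).trans_eq (by rw [norm_toEuclideanLin_exp_of_transpose_eq_neg (skew_smul _ hB)])
  have := norm_image_sub_le_of_norm_deriv_le_segment' (fun s _ => (hG s).hasDerivWithinAt)
    hG' 1 (Set.right_mem_Icc.mpr zero_le_one)
  simpa [G, φ] using this

end MatrixExp

theorem crossMat_transpose (r : EuclideanSpace ℝ (Fin 3)) : (crossMat r)ᵀ = -crossMat r := by
  ext i j
  fin_cases i <;> fin_cases j <;> simp [crossMat]

theorem crossMat_sub (a b : EuclideanSpace ℝ (Fin 3)) :
    crossMat (a - b) = crossMat a - crossMat b := by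
  ext i j
  fin_cases i <;> fin_cases j <;> simp [crossMat] <;> ring

theorem ofLp_mApp_crossMat (v w : EuclideanSpace ℝ (Fin 3)) :
    (mApp (crossMat v) w).ofLp = v.ofLp ⨯₃ w.ofLp := by
  ext i
  fin_cases i <;>
    simp [mApp, crossMat, toLpLin_apply, dotProduct, Fin.sum_univ_three, cross_apply] <;> ring

theorem norm_mApp_crossMat_le (v w : EuclideanSpace ℝ (Fin 3)) :
    ‖mApp (crossMat v) w‖ ≤ ‖v‖ * ‖w‖ := by
  have hsq : ∀ u : EuclideanSpace ℝ (Fin 3), ‖u‖ ^ 2 = u.ofLp ⬝ᵥ u.ofLp := fun u => by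
    rw [← real_inner_self_eq_norm_sq, EuclideanSpace.inner_eq_star_dotProduct, star_trivial]
  refine (pow_le_pow_iff_left₀ (norm_nonneg _) (by positivity) two_ne_zero).mp ?_
  rw [mul_pow, hsq, hsq, hsq, ofLp_mApp_crossMat, cross_dot_cross, dotProduct_comm w.ofLp v.ofLp]
  nlinarith [sq_nonneg (v.ofLp ⬝ᵥ w.ofLp)]

theorem norm_mApp_rotOf (r x : EuclideanSpace ℝ (Fin 3)) : ‖mApp (rotOf r) x‖ = ‖x‖ :=
  norm_toEuclideanLin_exp_of_transpose_eq_neg (crossMat_transpose r) x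

theorem norm_mApp_rotOf_sub_le (a b x : EuclideanSpace ℝ (Fin 3)) :
    ‖mApp (rotOf a) x - mApp (rotOf b) x‖ ≤ ‖a - b‖ * ‖x‖ :=
  norm_toEuclideanLin_exp_sub_exp_le (crossMat_transpose a) (crossMat_transpose b)
    (fun v => by rw [← crossMat_sub]; exact norm_mApp_crossMat_le (a - b) v) x

theorem angle_mApp_rotOf_le (a b : EuclideanSpace ℝ (Fin 3)) {x : EuclideanSpace ℝ (Fin 3)}
    (hx : x ≠ 0) : angle (mApp (rotOf a) x) (mApp (rotOf b) x) ≤ ‖a - b‖ := by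
  have hlip : ∀ s s' : ℝ, ‖mApp (rotOf (a + s • (b - a))) x - mApp (rotOf (a + s' • (b - a))) x‖
      ≤ ‖a - b‖ * ‖x‖ * |s - s'| := by
    intro s s'
    refine (norm_mApp_rotOf_sub_le _ _ x).trans_eq ?_
    rw [add_sub_add_left_eq_sub, ← sub_smul, norm_smul, norm_sub_rev b a, Real.norm_eq_abs]
    ring
  have := mul_angle_le_of_norm_sub_le (fun s => norm_mApp_rotOf _ x) hlip
  simp only [zero_smul, add_zero, one_smul, add_sub_cancel] at this
  exact le_of_mul_le_mul_left (this.trans_eq (mul_comm _ _)) (norm_pos_iff.mpr hx)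

theorem norm_mApp_rotOf_sub_le_two_mul_sin (a b x : EuclideanSpace ℝ (Fin 3)) {δ : ℝ}
    (h : ‖a - b‖ ≤ δ) :
    ‖mApp (rotOf a) x - mApp (rotOf b) x‖ ≤ 2 * sin (min (δ / 2) (π / 2)) * ‖x‖ := by
  rcases eq_or_ne x 0 with rfl | hx
  · simp [mApp]
  refine (norm_sub_le_two_mul_sin_min_mul (by rw [norm_mApp_rotOf, norm_mApp_rotOf])
    ((angle_mApp_rotOf_le a b hx).trans h)).trans_eq ?_
  rw [norm_mApp_rotOf]

theorem EuclideanSpace.norm_le_sqrt_card_mul {ι : Type*} [Fintype ι] {v : EuclideanSpace ℝ ι}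
    {σ : ℝ} (hσ : 0 ≤ σ) (h : ∀ k, |v k| ≤ σ) : ‖v‖ ≤ √(Fintype.card ι) * σ := by
  refine ((EuclideanSpace.basisFun ι ℝ).norm_le_card_mul_iSup_norm_inner v).trans ?_
  gcongr
  exact Real.iSup_le (fun k => by simpa using h k) hσ

theorem Finset.inf'_norm_sub_le_inf'_norm_sub_add {E : Type*} [SeminormedAddCommGroup E]
    (Y : Finset E) (hY : Y.Nonempty) (p q : E) :
    Y.inf' hY (fun y => ‖p - y‖) ≤ Y.inf' hY (fun y => ‖q - y‖) + ‖p - q‖ := by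
  obtain ⟨y, hy, hq⟩ := Y.exists_mem_eq_inf' hY fun y => ‖q - y‖
  rw [hq, add_comm]
  exact (Y.inf'_le _ hy).trans (norm_sub_le_norm_sub_add_norm_sub p q y)

theorem norm_rigidMotion_sub_le {r r₀ t t₀ : EuclideanSpace ℝ (Fin 3)} {σr σt : ℝ}
    (hσr : 0 ≤ σr) (hσt : 0 ≤ σt) (hr : ∀ k, |r k - r₀ k| ≤ σr) (ht : ∀ k, |t k - t₀ k| ≤ σt)
    (x : EuclideanSpace ℝ (Fin 3)) :
    ‖(mApp (rotOf r₀) x + t₀) - (mApp (rotOf r) x + t)‖ ≤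
      2 * sin (min (√3 * σr / 2) (π / 2)) * ‖x‖ + √3 * σt := by
  have cube : ∀ {v w : EuclideanSpace ℝ (Fin 3)} {σ : ℝ}, 0 ≤ σ → (∀ k, |v k - w k| ≤ σ) →
      ‖v - w‖ ≤ √3 * σ := fun hσ h => by
    have := EuclideanSpace.norm_le_sqrt_card_mul hσ (v := _ - _) (by simpa using h)
    rwa [Fintype.card_fin, Nat.cast_ofNat] at this
  rw [add_sub_add_comm]
  refine (norm_add_le _ _).trans (add_le_add ?_ ?_)
  · exact norm_mApp_rotOf_sub_le_two_mul_sin _ _ x (by rw [norm_sub_rev]; exact cube hσr hr)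
  · exact norm_sub_rev t₀ t ▸ cube hσt ht

theorem l2_registration_error_bounds
    (Y : Finset (EuclideanSpace ℝ (Fin 3))) (hY : Y.Nonempty)
    (N : ℕ) (x : Fin N → EuclideanSpace ℝ (Fin 3))
    (r₀ t₀ : EuclideanSpace ℝ (Fin 3)) (σr σt : ℝ) (hσr : 0 ≤ σr) (hσt : 0 ≤ σt) :
    let e : Fin N → EuclideanSpace ℝ (Fin 3) → EuclideanSpace ℝ (Fin 3) → ℝ :=
      fun i r t => Y.inf' hY fun y => ‖mApp (rotOf r) (x i) + t - y‖
    let E : EuclideanSpace ℝ (Fin 3) → EuclideanSpace ℝ (Fin 3) → ℝ :=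
      fun r t => ∑ i, (e i r t) ^ 2
    let γr : Fin N → ℝ :=
      fun i => 2 * Real.sin (min (Real.sqrt 3 * σr / 2) (Real.pi / 2)) * ‖x i‖
    let γt : ℝ := Real.sqrt 3 * σt
    let L : ℝ := ∑ i, (max (e i r₀ t₀ - (γr i + γt)) 0) ^ 2
    (∀ r t : EuclideanSpace ℝ (Fin 3),
        (∀ k, |r k - r₀ k| ≤ σr) → (∀ k, |t k - t₀ k| ≤ σt) → L ≤ E r t) ∧
    L ≤ sInf {v : ℝ | ∃ r t : EuclideanSpace ℝ (Fin 3),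
        (∀ k, |r k - r₀ k| ≤ σr) ∧ (∀ k, |t k - t₀ k| ≤ σt) ∧ v = E r t} ∧
    sInf {v : ℝ | ∃ r t : EuclideanSpace ℝ (Fin 3),
        (∀ k, |r k - r₀ k| ≤ σr) ∧ (∀ k, |t k - t₀ k| ≤ σt) ∧ v = E r t} ≤ E r₀ t₀ := by
  intro e E γr γt L
  have hbound : ∀ r t : EuclideanSpace ℝ (Fin 3),
      (∀ k, |r k - r₀ k| ≤ σr) → (∀ k, |t k - t₀ k| ≤ σt) → L ≤ E r t := by
    intro r t hr ht
    refine Finset.sum_le_sum fun i _ => pow_le_pow_left₀ (le_max_right _ _) (max_le ?_ ?_) 2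
    · have := (Y.inf'_norm_sub_le_inf'_norm_sub_add hY (mApp (rotOf r₀) (x i) + t₀)
        (mApp (rotOf r) (x i) + t)).trans
        (add_le_add le_rfl (norm_rigidMotion_sub_le hσr hσt hr ht (x i)))
      exact sub_le_iff_le_add.mpr this
    · exact Y.le_inf' hY _ fun y _ => norm_nonneg _
  have hmem : E r₀ t₀ ∈ {v : ℝ | ∃ r t : EuclideanSpace ℝ (Fin 3),
      (∀ k, |r k - r₀ k| ≤ σr) ∧ (∀ k, |t k - t₀ k| ≤ σt) ∧ v = E r t} :=
    ⟨r₀, t₀, fun k => by simpa using hσr, fun k => by simpa using hσt, rfl⟩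
  have hlower : L ∈ lowerBounds {v : ℝ | ∃ r t : EuclideanSpace ℝ (Fin 3),
      (∀ k, |r k - r₀ k| ≤ σr) ∧ (∀ k, |t k - t₀ k| ≤ σt) ∧ v = E r t} := by
    rintro v ⟨r, t, hr, ht, rfl⟩
    exact hbound r t hr ht
  exact ⟨hbound, le_csInf ⟨_, hmem⟩ hlower, csInf_le ⟨L, hlower⟩ hmem⟩
end
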